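/- For the hexagonal lattice Λ ⊂ ℝ² spanned by α = (1,0) and β = (1/2, √3/2), with the Euclidean metric, the systole of the flat torus ℝ²/Λ equals 1 and its area equals √3/2; hence area = (√3/2)·sys², so the equilateral flat torus attains equality in Loewner's inequality. -/

import Mathlib

/-!
Every vector of the lattice is `m • α + n • β` with `m n : ℤ`, and its squared length is the
Eisenstein norm `m² + m n + n²`. Since `4 (m² + m n + n²) = (2 m + n)² + 3 n²`, this integer is
positive, hence at least `1`, for `(m, n) ≠ 0`; `α` realises the value `1`, so the systole is `1`.
The area is the determinant `√3 / 2`.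
-/

open Real

noncomputable def hexAlpha : EuclideanSpace ℝ (Fin 2) := WithLp.toLp 2 ![1, 0]
noncomputable def hexBeta : EuclideanSpace ℝ (Fin 2) := WithLp.toLp 2 ![1 / 2, Real.sqrt 3 / 2]

/-- The hexagonal (equilateral) lattice. -/
noncomputable def hexLat : AddSubgroup (EuclideanSpace ℝ (Fin 2)) :=
  AddSubgroup.closure {hexAlpha, hexBeta}

/-- Systole of the Euclidean flat torus ℝ²/Λ: least Euclidean norm of a
nonzero lattice vector. -/
noncomputable def hexSys : ℝ :=
  sInf ((fun l => ‖l‖) '' {l : EuclideanSpace ℝ (Fin 2) | l ∈ hexLat ∧ l ≠ 0})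

/-- Area of the flat torus = covolume of Λ = |det of the basis matrix|. -/
noncomputable def hexArea : ℝ :=
  |Matrix.det !![(1 : ℝ), 0; 1 / 2, Real.sqrt 3 / 2]|

theorem Int.one_le_sq_add_mul_add_sq {m n : ℤ} (h : m ≠ 0 ∨ n ≠ 0) :
    1 ≤ m ^ 2 + m * n + n ^ 2 := by
  have hpos : 0 < m ^ 2 + m * n + n ^ 2 := by
    rcases h with hm | hn
    · nlinarith [sq_nonneg (m + 2 * n), sq_pos_of_ne_zero hm]
    · nlinarith [sq_nonneg (2 * m + n), sq_pos_of_ne_zero hn]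
  omega

theorem mem_hexLat_iff {l : EuclideanSpace ℝ (Fin 2)} :
    l ∈ hexLat ↔ ∃ m n : ℤ, m • hexAlpha + n • hexBeta = l :=
  AddSubgroup.mem_closure_pair

theorem hexAlpha_mem_hexLat : hexAlpha ∈ hexLat :=
  AddSubgroup.subset_closure (Set.mem_insert _ _)

theorem norm_hexAlpha : ‖hexAlpha‖ = 1 := by
  simp [EuclideanSpace.norm_eq, Fin.sum_univ_two, hexAlpha]

theorem norm_zsmul_hexAlpha_add_zsmul_hexBeta_sq (m n : ℤ) :
    ‖m • hexAlpha + n • hexBeta‖ ^ 2 = ((m ^ 2 + m * n + n ^ 2 : ℤ) : ℝ) := by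
  have h3 : √3 ^ 2 = 3 := sq_sqrt (by norm_num)
  simp only [EuclideanSpace.real_norm_sq_eq, Fin.sum_univ_two, hexAlpha, hexBeta,
    WithLp.ofLp_add, WithLp.ofLp_smul, Pi.add_apply, zsmul_eq_mul, Pi.mul_apply,
    Matrix.cons_val_zero, Matrix.cons_val_one, Matrix.cons_val_fin_one, Pi.intCast_apply]
  push_cast
  linear_combination (n ^ 2 / 4 : ℝ) * h3

theorem one_le_norm_of_mem_hexLat {l : EuclideanSpace ℝ (Fin 2)} (hl : l ∈ hexLat)
    (hl0 : l ≠ 0) : 1 ≤ ‖l‖ := by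
  obtain ⟨m, n, rfl⟩ := mem_hexLat_iff.mp hl
  have hmn : m ≠ 0 ∨ n ≠ 0 := by
    by_contra! h
    obtain ⟨rfl, rfl⟩ := h
    simp at hl0
  have hsq : 1 ≤ ‖m • hexAlpha + n • hexBeta‖ ^ 2 := by
    rw [norm_zsmul_hexAlpha_add_zsmul_hexBeta_sq]
    exact_mod_cast Int.one_le_sq_add_mul_add_sq hmn
  exact (one_le_sq_iff₀ (norm_nonneg _)).mp hsq

theorem hexSys_eq_one : hexSys = 1 := by
  refine IsLeast.csInf_eq ⟨⟨hexAlpha, ⟨hexAlpha_mem_hexLat, ?_⟩, norm_hexAlpha⟩, ?_⟩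
  · exact norm_ne_zero_iff.mp (norm_hexAlpha ▸ one_ne_zero)
  · rintro _ ⟨l, ⟨hl, hl0⟩, rfl⟩
    exact one_le_norm_of_mem_hexLat hl hl0

theorem hexArea_eq : hexArea = √3 / 2 := by
  simp [hexArea, Matrix.det_fin_two_of, abs_of_nonneg (by positivity : (0 : ℝ) ≤ √3 / 2)]

theorem hexagonal_torus_loewner_equality :
    hexSys = 1 ∧
    hexArea = Real.sqrt 3 / 2 ∧
    hexArea = (Real.sqrt 3 / 2) * hexSys ^ 2 := by
  refine ⟨hexSys_eq_one, hexArea_eq, ?_⟩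
  rw [hexArea_eq, hexSys_eq_one]
  ring
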